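/- arXiv:2509.02105 — 2 statements merged into one kernel-verified Lean document; each statement's English description precedes it below -/
import Mathlib

section
/- Let d ≥ 2 be an integer. The top cohomology group H^{d−1}(AC(d)) of Arone's complex is isomorphic to ℤ/2, and a generator is given by the cohomology class of the basis element ⟨1 2 ⋯ (d−1)⟩ ∈ AC(d)^{d−1}. -/
noncomputable section

/-- Basis of degree-`k` part of Arone's complex `AC(d)`: strictly increasing sequences
`0 < n₁ < ⋯ < n_k < d`, encoded as `k`-element subsets of `Ioo 0 d`. -/
def ACBasis (d k : ℕ) : Type :=
  {S : Finset ℕ // S ⊆ Finset.Ioo 0 d ∧ S.card = k}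

/-- Degree-`k` part of Arone's complex: the free abelian group on `ACBasis d k`. -/
abbrev ACMod (d k : ℕ) : Type := ACBasis d k →₀ ℤ

/-- The previous entry `n_{j-1}` (with convention `n₀ = 0`) relative to inserting `m` into `S`. -/
def ACprev (S : Finset ℕ) (m : ℕ) : ℕ := ((S.filter (· < m)).max).unbotD 0

/-- The next entry `n_j` (with convention `n_{k+1} = d`) relative to inserting `m` into `S`. -/
def ACnext (d : ℕ) (S : Finset ℕ) (m : ℕ) : ℕ := ((S.filter (fun x => m < x)).min).untopD d

/-- The coefficient `(-1)^j * C(n_j - n_{j-1}, m - n_{j-1})` of the differential. -/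
def ACcoef (d : ℕ) (S : Finset ℕ) (m : ℕ) : ℤ :=
  (-1 : ℤ) ^ ((S.filter (· < m)).card + 1) *
    (Nat.choose (ACnext d S m - ACprev S m) (m - ACprev S m) : ℤ)

/-- Image of the basis element `⟨S⟩` under the differential. -/
def ACdiffSingle (d k : ℕ) (S : ACBasis d k) : ACMod d (k + 1) :=
  ∑ m ∈ (Finset.Ioo 0 d \ S.1).attach,
    ACcoef d S.1 (m : ℕ) •
      Finsupp.single
        (⟨insert (m : ℕ) S.1, by
          obtain ⟨hm1, hm2⟩ := Finset.mem_sdiff.mp m.2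
          exact ⟨Finset.insert_subset hm1 S.2.1, by
            rw [Finset.card_insert_of_notMem hm2, S.2.2]⟩⟩ : ACBasis d (k + 1)) (1 : ℤ)

/-- The differential `δᵏ : AC(d)ᵏ → AC(d)^{k+1}` of Arone's complex. -/
def ACdiff (d k : ℕ) : ACMod d k →ₗ[ℤ] ACMod d (k + 1) :=
  Finsupp.lsum ℤ fun S => LinearMap.toSpanSingleton ℤ (ACMod d (k + 1)) (ACdiffSingle d k S)

/-- The `k`-cocycles of Arone's complex. -/
def ACZ (d k : ℕ) : Submodule ℤ (ACMod d k) := LinearMap.ker (ACdiff d k)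

/-- The `k`-coboundaries of Arone's complex (`0` in degree `0`). -/
def ACB (d : ℕ) : (k : ℕ) → Submodule ℤ (ACMod d k)
  | 0 => ⊥
  | k + 1 => LinearMap.range (ACdiff d k)

/-- The `k`-th cohomology of Arone's complex, as cocycles modulo coboundaries. -/
abbrev ACH (d k : ℕ) :=
  ACZ d k ⧸ Submodule.comap (ACZ d k).subtype (ACB d k)

/-- The cohomology class of a cocycle. -/
def ACHmk (d k : ℕ) (z : ACZ d k) : ACH d k := Submodule.Quotient.mk z


/-- The top basis element `⟨1 2 ⋯ (d-1)⟩` of `AC(d)^{d-1}`. -/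
def ACtop (d : ℕ) : ACMod d (d - 1) :=
  Finsupp.single
    (⟨Finset.Ioo 0 d, subset_rfl, by simp [Nat.card_Ioo]⟩ : ACBasis d (d - 1)) (1 : ℤ)

lemma maxu {s : Finset ℕ} {a : ℕ} (ha : a ∈ s) (h : ∀ b ∈ s, b ≤ a) : s.max.unbotD 0 = a := by
  have : s.max = (a : WithBot ℕ) := le_antisymm (Finset.max_le (fun b hb => WithBot.coe_le_coe.mpr (h b hb))) (Finset.le_max ha)
  rw [this]; rfl

lemma minu {s : Finset ℕ} {a d : ℕ} (ha : a ∈ s) (h : ∀ b ∈ s, a ≤ b) : s.min.untopD d = a := by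
  have : s.min = (a : WithTop ℕ) := le_antisymm (Finset.min_le ha) (Finset.le_min (fun b hb => WithTop.coe_le_coe.mpr (h b hb)))
  rw [this]; rfl

lemma filt_lt (d m : ℕ) (hm : m ∈ Finset.Ioo 0 d) :
    ((Finset.Ioo 0 d \ {m}).filter (· < m)) = Finset.Ioo 0 m := by
  simp only [Finset.mem_Ioo] at hm
  ext x; simp only [Finset.mem_filter, Finset.mem_sdiff, Finset.mem_Ioo, Finset.mem_singleton]
  omega

lemma filt_gt (d m : ℕ) (hm : m ∈ Finset.Ioo 0 d) :
    ((Finset.Ioo 0 d \ {m}).filter (fun x => m < x)) = Finset.Ioo m d := by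
  simp only [Finset.mem_Ioo] at hm
  ext x; simp only [Finset.mem_filter, Finset.mem_sdiff, Finset.mem_Ioo, Finset.mem_singleton]
  omega

lemma coef_eq (d m : ℕ) (hm : m ∈ Finset.Ioo 0 d) :
    ACcoef d (Finset.Ioo 0 d \ {m}) m = (-1) ^ m * 2 := by
  simp only [Finset.mem_Ioo] at hm
  have hprev : ACprev (Finset.Ioo 0 d \ {m}) m = m - 1 := by
    rw [ACprev, filt_lt d m (by simp [Finset.mem_Ioo]; omega)]
    rcases Nat.eq_or_lt_of_le hm.1 with h1 | h1
    · have : Finset.Ioo 0 m = ∅ := by ext x; simp [Finset.mem_Ioo]; omega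
      rw [this]; simp; omega
    · exact maxu (by simp [Finset.mem_Ioo]; omega) (fun b hb => by simp [Finset.mem_Ioo] at hb; omega)
  have hnext : ACnext d (Finset.Ioo 0 d \ {m}) m = m + 1 := by
    rw [ACnext, filt_gt d m (by simp [Finset.mem_Ioo]; omega)]
    rcases Nat.eq_or_lt_of_le hm.2 with h1 | h1
    · have : Finset.Ioo m d = ∅ := by ext x; simp [Finset.mem_Ioo]; omega
      rw [this]; simp [Finset.min_empty]; omega
    · exact minu (by simp [Finset.mem_Ioo]; omega) (fun b hb => by simp [Finset.mem_Ioo] at hb; omega)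
  rw [ACcoef, hprev, hnext, filt_lt d m (by simp [Finset.mem_Ioo]; omega)]
  have h2 : m + 1 - (m - 1) = 2 := by omega
  have h3 : m - (m - 1) = 1 := by omega
  have h4 : (Finset.Ioo 0 m).card + 1 = m := by rw [Nat.card_Ioo]; omega
  rw [h2, h3, h4]
  norm_num

section E
variable (e : ℕ)

instance : IsEmpty (ACBasis (e + 2) (e + 2)) := by
  constructor
  rintro ⟨S, hS, hc⟩
  have := Finset.card_le_card hS
  rw [hc, Nat.card_Ioo] at this
  omega

instance : Subsingleton (ACMod (e + 2) (e + 2)) :=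
  ⟨fun f g => Finsupp.ext fun a => isEmptyElim a⟩

def ACfull : ACBasis (e + 2) (e + 1) :=
  ⟨Finset.Ioo 0 (e + 2), subset_rfl, by simp [Nat.card_Ioo]⟩

instance : Unique (ACBasis (e + 2) (e + 1)) where
  default := ACfull e
  uniq := by
    intro x
    apply Subtype.ext
    show x.1 = Finset.Ioo 0 (e + 2)
    exact Finset.eq_of_subset_of_card_le x.2.1 (by rw [x.2.2, Nat.card_Ioo]; omega)

lemma ACtop_eq : ACtop (e + 2) = Finsupp.single (ACfull e) 1 := rfl

lemma top_decomp (x : ACMod (e + 2) (e + 1)) :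
    x = x (ACfull e) • Finsupp.single (ACfull e) 1 := by
  apply Finsupp.ext
  intro a
  have : a = ACfull e := Subsingleton.elim a _
  subst this
  simp

-- every basis element in degree e is Ioo \ {m}
lemma basis_decomp (S : ACBasis (e + 2) e) :
    ∃ m ∈ Finset.Ioo 0 (e + 2), S.1 = Finset.Ioo 0 (e + 2) \ {m} := by
  obtain ⟨S, hS, hc⟩ := S
  have hcard : (Finset.Ioo 0 (e + 2) \ S).card = 1 := by
    rw [Finset.card_sdiff_of_subset hS, Nat.card_Ioo, hc]; omega
  obtain ⟨m, hm⟩ := Finset.card_eq_one.mp hcard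
  refine ⟨m, ?_, ?_⟩
  · have : m ∈ Finset.Ioo 0 (e + 2) \ S := by rw [hm]; exact Finset.mem_singleton_self m
    exact (Finset.mem_sdiff.mp this).1
  · simp only
    rw [← hm]
    exact (sdiff_sdiff_eq_self hS).symm

lemma diffSingle_eq (m : ℕ) (hm : m ∈ Finset.Ioo 0 (e + 2))
    (h : Finset.Ioo 0 (e + 2) \ {m} ⊆ Finset.Ioo 0 (e + 2) ∧ (Finset.Ioo 0 (e + 2) \ {m}).card = e) :
    ACdiffSingle (e + 2) e ⟨Finset.Ioo 0 (e + 2) \ {m}, h⟩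
      = ((-1) ^ m * 2 : ℤ) • Finsupp.single (ACfull e) 1 := by
  have pm : m ∈ Finset.Ioo 0 (e + 2) \ (Finset.Ioo 0 (e + 2) \ {m}) := by
    exact Finset.mem_sdiff.mpr ⟨hm, by simp⟩
  have hattach : (Finset.Ioo 0 (e + 2) \ (Finset.Ioo 0 (e + 2) \ {m})).attach = {⟨m, pm⟩} := by
    apply Finset.eq_singleton_iff_unique_mem.mpr
    refine ⟨Finset.mem_attach _ _, fun x _ => Subtype.ext ?_⟩
    have hx := x.2
    simp only [Finset.mem_sdiff, Finset.mem_singleton, not_and, not_not] at hx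
    exact hx.2 hx.1
  unfold ACdiffSingle
  rw [hattach]
  erw [Finset.sum_singleton]
  have hins : insert m (Finset.Ioo 0 (e + 2) \ {m}) = Finset.Ioo 0 (e + 2) := by
    rw [Finset.sdiff_singleton_eq_erase, Finset.insert_erase hm]
  congr 1
  · exact coef_eq _ _ hm
  · congr 1
    exact Subtype.ext hins



lemma diffSingle_mem (S : ACBasis (e + 2) e) :
    ∃ s : ℤ, ACdiffSingle (e + 2) e S = s • ((2 : ℤ) • Finsupp.single (ACfull e) 1) := by
  obtain ⟨m, hm, hS⟩ := basis_decomp e S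
  obtain ⟨Sv, hP⟩ := S
  simp only at hS
  subst hS
  refine ⟨(-1) ^ m, ?_⟩
  rw [diffSingle_eq e m hm hP, smul_smul]

lemma range_le : LinearMap.range (ACdiff (e + 2) e) ≤
    Submodule.span ℤ {(2 : ℤ) • Finsupp.single (ACfull e) 1} := by
  rintro x ⟨y, rfl⟩
  rw [ACdiff, Finsupp.lsum_apply, Finsupp.sum]
  apply Submodule.sum_mem
  intro S _
  rw [LinearMap.toSpanSingleton_apply]
  obtain ⟨s, hs⟩ := diffSingle_mem e S
  rw [hs]
  exact Submodule.smul_mem _ _ (Submodule.smul_mem _ _ (Submodule.mem_span_singleton_self _))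

lemma two_mem : (2 : ℤ) • Finsupp.single (ACfull e) 1 ∈ LinearMap.range (ACdiff (e + 2) e) := by
  have h1 : (1 : ℕ) ∈ Finset.Ioo 0 (e + 2) := by simp
  have hP : Finset.Ioo 0 (e + 2) \ {1} ⊆ Finset.Ioo 0 (e + 2) ∧
      (Finset.Ioo 0 (e + 2) \ {1}).card = e := by
    refine ⟨Finset.sdiff_subset, ?_⟩
    rw [Finset.card_sdiff_of_subset (Finset.singleton_subset_iff.mpr h1), Nat.card_Ioo]
    simp
  refine ⟨Finsupp.single (⟨_, hP⟩ : ACBasis (e + 2) e) (-1), ?_⟩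
  erw [ACdiff, Finsupp.lsum_single, LinearMap.toSpanSingleton_apply, diffSingle_eq e 1 h1 hP,
    smul_smul]
  norm_num

lemma ACB_succ (d k : ℕ) : ACB d (k + 1) = LinearMap.range (ACdiff d k) := rfl

theorem main (e : ℕ) :
    Nonempty (ACH (e + 2) (e + 1) ≃+ ZMod 2) ∧
    ∃ z : ACZ (e + 2) (e + 1),
      (z : ACMod (e + 2) (e + 1)) = ACtop (e + 2) ∧
      ∀ y : ACH (e + 2) (e + 1), ∃ n : ℤ, y = n • ACHmk (e + 2) (e + 1) z := by
  have hZ : ∀ x : ACMod (e + 2) (e + 1), x ∈ ACZ (e + 2) (e + 1) := by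
    intro x
    exact LinearMap.mem_ker.mpr (Subsingleton.elim _ _)
  set ztop : ACZ (e + 2) (e + 1) := ⟨ACtop (e + 2), hZ _⟩ with hztop
  set p := Submodule.comap (ACZ (e + 2) (e + 1)).subtype (ACB (e + 2) (e + 1)) with hp
  set F : ACZ (e + 2) (e + 1) →ₗ[ℤ] ZMod 2 :=
    (Int.castAddHom (ZMod 2)).toIntLinearMap ∘ₗ (Finsupp.lapply (ACfull e)) ∘ₗ
      (ACZ (e + 2) (e + 1)).subtype with hF
  have hFapp : ∀ z : ACZ (e + 2) (e + 1),
      F z = (((z : ACMod (e + 2) (e + 1)) (ACfull e) : ℤ) : ZMod 2) := fun z => rfl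
  have hker : p ≤ LinearMap.ker F := by
    intro z hz
    rw [hp, Submodule.mem_comap, ACB_succ] at hz
    have hz2 := range_le e hz
    obtain ⟨c, hc⟩ := Submodule.mem_span_singleton.mp hz2
    rw [Submodule.subtype_apply] at hc
    rw [LinearMap.mem_ker, hFapp, ← hc]
    simp only [Finsupp.smul_apply, Finsupp.single_eq_same, smul_eq_mul, mul_one]
    exact (ZMod.intCast_zmod_eq_zero_iff_dvd _ 2).mpr ⟨c, by ring⟩
  set g := p.liftQ F hker with hg
  have hg1 : g (ACHmk (e + 2) (e + 1) ztop) = 1 := by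
    rw [ACHmk, hg, Submodule.liftQ_apply, hFapp]
    simp [hztop, ACtop_eq, Finsupp.single_eq_same]
  have hsurj : Function.Surjective g := by
    intro y
    obtain ⟨n, rfl⟩ := ZMod.intCast_surjective y
    exact ⟨n • ACHmk (e + 2) (e + 1) ztop, by rw [map_zsmul, hg1, zsmul_one]⟩
  have hinj : Function.Injective g := by
    rw [← LinearMap.ker_eq_bot]
    apply Submodule.ker_liftQ_eq_bot
    intro z hz
    rw [LinearMap.mem_ker, hFapp] at hz
    obtain ⟨c, hc⟩ := (ZMod.intCast_zmod_eq_zero_iff_dvd _ 2).mp hz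
    rw [hp, Submodule.mem_comap, ACB_succ]
    have hdec := top_decomp e (z : ACMod (e + 2) (e + 1))
    rw [hc] at hdec
    have : (z : ACMod (e + 2) (e + 1)) = c • ((2 : ℤ) • Finsupp.single (ACfull e) 1) := by
      rw [hdec, smul_smul]; congr 1; push_cast; ring
    rw [Submodule.subtype_apply, this]
    exact Submodule.smul_mem _ _ (two_mem e)
  refine ⟨⟨(LinearEquiv.ofBijective g ⟨hinj, hsurj⟩).toAddEquiv⟩, ztop, rfl, ?_⟩
  intro y
  obtain ⟨w, rfl⟩ := Submodule.Quotient.mk_surjective p y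
  refine ⟨(w : ACMod (e + 2) (e + 1)) (ACfull e), ?_⟩
  rw [ACHmk, ← Submodule.Quotient.mk_smul]
  congr 1
  apply Subtype.ext
  rw [Submodule.coe_smul, hztop]
  exact top_decomp e _

end E

/-- the top cohomology `H^{d-1}(AC(d))` is `ℤ/2`, generated by the class of
the basis element `⟨1 2 ⋯ (d-1)⟩`. -/
theorem Htop_aroneComplex (d : ℕ) (hd : 2 ≤ d) :
    Nonempty (ACH d (d - 1) ≃+ ZMod 2) ∧
    ∃ z : ACZ d (d - 1),
      (z : ACMod d (d - 1)) = ACtop d ∧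
      ∀ y : ACH d (d - 1), ∃ n : ℤ, y = n • ACHmk d (d - 1) z := by
  obtain ⟨e, rfl⟩ : ∃ e, d = e + 2 := ⟨d - 2, by omega⟩
  exact main e

end
end

section
/- Let d ≥ 2 be an integer. For every i ≥ 1 the cohomology group H^i(AC(d)) of Arone's complex is a finite group, and moreover H^0(AC(d)) = 0. -/
noncomputable section

----------------------------------------------------------------
-- auxiliary development
namespace AroneAux

open Finset

variable {d k : ℕ}

lemma untop'_min_le {A : Finset ℕ} {x e : ℕ} (hx : x ∈ A) : A.min.untopD e ≤ x := by
  have h := Finset.min_le hx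
  rcases hmin : A.min with _ | a
  · rw [hmin] at h; exact absurd h (WithTop.not_top_le_coe x)
  · rw [hmin] at h; exact WithTop.coe_le_coe.mp h

lemma le_min_untop' {A : Finset ℕ} {c e : ℕ} (h : ∀ x ∈ A, c ≤ x) (hce : c ≤ e) :
    c ≤ A.min.untopD e := by
  rcases hmin : A.min with _ | a
  · exact hce
  · exact h a (Finset.mem_of_min hmin)

lemma min_untop'_eq_or (A : Finset ℕ) (e : ℕ) : A.min.untopD e = e ∨ A.min.untopD e ∈ A := by
  rcases hmin : A.min with _ | a
  · exact Or.inl rfl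
  · exact Or.inr (Finset.mem_of_min hmin)

lemma le_unbot'_max {A : Finset ℕ} {x e : ℕ} (hx : x ∈ A) : x ≤ A.max.unbotD e := by
  have h := Finset.le_max hx
  rcases hmax : A.max with _ | a
  · rw [hmax] at h; exact absurd h (WithBot.not_coe_le_bot x)
  · rw [hmax] at h; exact WithBot.coe_le_coe.mp h

lemma unbot'_max_le {A : Finset ℕ} {c e : ℕ} (h : ∀ x ∈ A, x ≤ c) (hce : e ≤ c) :
    A.max.unbotD e ≤ c := by
  rcases hmax : A.max with _ | a
  · exact hce
  · exact h a (Finset.mem_of_max hmax)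

lemma ACnext_bounds (hd : 0 < d) {S : Finset ℕ} (hS : S ⊆ Finset.Ioo 0 d) (m : ℕ) :
    0 < ACnext d S m ∧ ACnext d S m ≤ d := by
  rcases min_untop'_eq_or (S.filter (fun x => m < x)) d with h | h
  · unfold ACnext; rw [h]; exact ⟨hd, le_rfl⟩
  · have hmem := Finset.mem_Ioo.mp (hS (Finset.mem_of_mem_filter _ h))
    exact ⟨hmem.1, hmem.2.le⟩

lemma ACnext_dvd_factorial (hd : 0 < d) {S : Finset ℕ} (hS : S ⊆ Finset.Ioo 0 d) (m : ℕ) :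
    ACnext d S m ∣ d.factorial :=
  Nat.dvd_factorial (ACnext_bounds hd hS m).1 (ACnext_bounds hd hS m).2

lemma two_le_of_mem {S : Finset ℕ} (hS : S ⊆ Finset.Ioo 0 d) (h1 : 1 ∉ S) {x : ℕ}
    (hx : x ∈ S) : 2 ≤ x := by
  have h := (Finset.mem_Ioo.mp (hS hx)).1
  have : x ≠ 1 := fun e => h1 (e ▸ hx)
  omega

lemma filter_one_lt {S : Finset ℕ} (hS : S ⊆ Finset.Ioo 0 d) (h1 : 1 ∉ S) :
    S.filter (fun x => 1 < x) = S :=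
  Finset.filter_eq_self.mpr fun x hx => two_le_of_mem hS h1 hx

lemma ACnext_one {S : Finset ℕ} (hS : S ⊆ Finset.Ioo 0 d) (h1 : 1 ∉ S) :
    ACnext d S 1 = S.min.untopD d := by
  unfold ACnext; rw [filter_one_lt hS h1]

lemma filter_lt_one {S : Finset ℕ} (hS : S ⊆ Finset.Ioo 0 d) : S.filter (· < 1) = ∅ := by
  rw [Finset.filter_eq_empty_iff]
  intro x hx
  have := (Finset.mem_Ioo.mp (hS hx)).1; omega

lemma ACprev_one {S : Finset ℕ} (hS : S ⊆ Finset.Ioo 0 d) : ACprev S 1 = 0 := by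
  unfold ACprev; rw [filter_lt_one hS]; rfl

lemma ACcoef_one {S : Finset ℕ} (hS : S ⊆ Finset.Ioo 0 d) :
    ACcoef d S 1 = -(ACnext d S 1 : ℤ) := by
  unfold ACcoef
  rw [filter_lt_one hS, ACprev_one hS]
  simp

lemma div_choose {D r m : ℕ} (hr : r ∣ D) (hm : m ∣ D) (hm1 : 1 ≤ m) (hmr : m ≤ r) :
    D / r * Nat.choose r m = D / m * Nat.choose (r - 1) (m - 1) := by
  obtain ⟨r', rfl⟩ : ∃ r', r = r' + 1 := ⟨r - 1, by omega⟩
  obtain ⟨m', rfl⟩ : ∃ m', m = m' + 1 := ⟨m - 1, by omega⟩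
  simp only [Nat.add_sub_cancel]
  have key : (r' + 1) * Nat.choose r' m' = Nat.choose (r' + 1) (m' + 1) * (m' + 1) :=
    Nat.add_one_mul_choose_eq r' m'
  have hrm : 0 < (r' + 1) * (m' + 1) := by positivity
  apply Nat.eq_of_mul_eq_mul_left hrm
  calc (r' + 1) * (m' + 1) * (D / (r' + 1) * Nat.choose (r' + 1) (m' + 1))
      = ((r' + 1) * (D / (r' + 1))) * (Nat.choose (r' + 1) (m' + 1) * (m' + 1)) := by ring
    _ = D * ((r' + 1) * Nat.choose r' m') := by rw [Nat.mul_div_cancel' hr, key]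
    _ = ((m' + 1) * (D / (m' + 1))) * ((r' + 1) * Nat.choose r' m') := by
        rw [Nat.mul_div_cancel' hm]
    _ = (r' + 1) * (m' + 1) * (D / (m' + 1) * Nat.choose r' m') := by ring

lemma scalar_key (hd : 2 ≤ d) {A : Finset ℕ} (hA : A ⊆ Finset.Ioo 0 d) (h1A : 1 ∉ A)
    {m : ℕ} (hm1 : 1 < m) (hmd : m < d) (hmA : m ∉ A) :
    ACcoef d (insert 1 A) m * (-((d.factorial / ACnext d (insert m A) 1 : ℕ) : ℤ))
      + (-((d.factorial / ACnext d A 1 : ℕ) : ℤ)) * ACcoef d A m = 0 := by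
  have hd0 : 0 < d := by omega
  set r := ACnext d A 1 with hrdef
  have hAnext : r = A.min.untopD d := ACnext_one hA h1A
  have hub : ∀ x ∈ A, r ≤ x := fun x hx => hAnext ▸ untop'_min_le hx
  have hrbounds : 0 < r ∧ r ≤ d := ACnext_bounds hd0 hA 1
  have hrd : r ∣ d.factorial := ACnext_dvd_factorial hd0 hA 1
  have hfmA : (insert m A).filter (fun x => 1 < x) = insert m A := by
    rw [Finset.filter_insert, if_pos hm1, filter_one_lt hA h1A]
  have hrm_eq : ACnext d (insert m A) 1 = ((insert m A).min).untopD d := by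
    unfold ACnext; rw [hfmA]
  have hmr : m ≠ r := by
    rcases min_untop'_eq_or A d with h | h
    · rw [← hAnext] at h; omega
    · rw [← hAnext] at h; exact fun e => hmA (e ▸ h)
  rcases lt_or_gt_of_ne hmr with hlt | hgt
  · -- m < r
    have c1 : A.filter (· < m) = ∅ := by
      rw [Finset.filter_eq_empty_iff]
      intro x hx
      have := hub x hx; omega
    have c2 : A.filter (fun x => m < x) = A :=
      Finset.filter_eq_self.mpr fun x hx => by have := hub x hx; omega
    have hnextA : ACnext d A m = r := by unfold ACnext; rw [c2]; exact hAnext.symm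
    have hprevA : ACprev A m = 0 := by unfold ACprev; rw [c1]; rfl
    have c3 : (insert 1 A).filter (· < m) = {1} := by
      rw [Finset.filter_insert, if_pos hm1, c1]; rfl
    have hprevS : ACprev (insert 1 A) m = 1 := by
      unfold ACprev; rw [c3, Finset.max_singleton]; rfl
    have c4 : (insert 1 A).filter (fun x => m < x) = A := by
      rw [Finset.filter_insert, if_neg (by omega), c2]
    have hnextS : ACnext d (insert 1 A) m = r := by
      unfold ACnext; rw [c4]; exact hAnext.symm
    have hrm : ACnext d (insert m A) 1 = m := by
      rw [hrm_eq]
      refine le_antisymm (untop'_min_le (Finset.mem_insert_self m A)) ?_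
      refine le_min_untop' ?_ (by omega)
      intro x hx
      rcases Finset.mem_insert.mp hx with rfl | hx
      · exact le_rfl
      · have := hub x hx; omega
    have hmdvd : m ∣ d.factorial := Nat.dvd_factorial (by omega) (by omega)
    have hnat : d.factorial / r * Nat.choose r m
        = d.factorial / m * Nat.choose (r - 1) (m - 1) :=
      div_choose hrd hmdvd (by omega) (le_of_lt hlt)
    have hcast : ((d.factorial / r : ℕ) : ℤ) * (Nat.choose r m : ℤ)
        = ((d.factorial / m : ℕ) : ℤ) * (Nat.choose (r - 1) (m - 1) : ℤ) := by
      exact_mod_cast congrArg (fun n : ℕ => (n : ℤ)) hnat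
    unfold ACcoef
    rw [hrm, hnextA, hprevA, hnextS, hprevS, c1, c3]
    simp only [Finset.card_singleton, Finset.card_empty, Nat.sub_zero]
    linear_combination hcast
  · -- r < m
    have hrA : r ∈ A := by
      rcases min_untop'_eq_or A d with h | h
      · rw [← hAnext] at h; omega
      · rwa [← hAnext] at h
    have hr2 : 2 ≤ r := two_le_of_mem hA h1A hrA
    have hrF : r ∈ A.filter (· < m) := Finset.mem_filter.mpr ⟨hrA, hgt⟩
    have h1F : 1 ∉ A.filter (· < m) := fun h => h1A (Finset.mem_of_mem_filter _ h)
    have c3 : (insert 1 A).filter (· < m) = insert 1 (A.filter (· < m)) := by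
      rw [Finset.filter_insert, if_pos hm1]
    have hcard : ((insert 1 A).filter (· < m)).card = (A.filter (· < m)).card + 1 := by
      rw [c3, Finset.card_insert_of_notMem h1F]
    have hprevS : ACprev (insert 1 A) m = ACprev A m := by
      unfold ACprev
      rw [c3]
      refine le_antisymm (unbot'_max_le ?_ ?_) ?_
      · intro x hx
        rcases Finset.mem_insert.mp hx with rfl | hx
        · exact le_trans (by omega : (1:ℕ) ≤ r) (le_unbot'_max hrF)
        · exact le_unbot'_max hx
      · exact Nat.zero_le _
      · refine unbot'_max_le ?_ (Nat.zero_le _)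
        intro x hx
        exact le_unbot'_max (Finset.mem_insert_of_mem hx)
    have c4 : (insert 1 A).filter (fun x => m < x) = A.filter (fun x => m < x) := by
      rw [Finset.filter_insert, if_neg (by omega)]
    have hnextS : ACnext d (insert 1 A) m = ACnext d A m := by
      unfold ACnext; rw [c4]
    have hrm : ACnext d (insert m A) 1 = r := by
      rw [hrm_eq]
      refine le_antisymm (untop'_min_le (Finset.mem_insert_of_mem hrA)) ?_
      refine le_min_untop' ?_ hrbounds.2
      intro x hx
      rcases Finset.mem_insert.mp hx with rfl | hx
      · omega
      · exact hub x hx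
    unfold ACcoef
    rw [hrm, hnextS, hprevS, hcard]
    ring

----------------------------------------------------------------
-- the homotopy and the Finsupp layer

def AChSingle (d k : ℕ) (T : ACBasis d (k + 1)) : ACMod d k :=
  if h1 : 1 ∈ T.1 then
    (-((d.factorial / ACnext d (T.1.erase 1) 1 : ℕ) : ℤ)) •
      Finsupp.single
        (⟨T.1.erase 1, (Finset.erase_subset _ _).trans T.2.1, by
          rw [Finset.card_erase_of_mem h1, T.2.2]; omega⟩ : ACBasis d k) (1 : ℤ)
  else 0

def ACh (d k : ℕ) : ACMod d (k + 1) →ₗ[ℤ] ACMod d k :=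
  Finsupp.lsum ℤ fun T => LinearMap.toSpanSingleton ℤ (ACMod d k) (AChSingle d k T)

lemma ACh_single (T : ACBasis d (k + 1)) (c : ℤ) :
    ACh d k (Finsupp.single T c) = c • AChSingle d k T := by
  simp [ACh, Finsupp.lsum_single, LinearMap.toSpanSingleton_apply]

lemma ACdiff_single (S : ACBasis d k) (c : ℤ) :
    ACdiff d k (Finsupp.single S c) = c • ACdiffSingle d k S := by
  simp [ACdiff, Finsupp.lsum_single, LinearMap.toSpanSingleton_apply]

def ACD (d k : ℕ) (S : ACBasis d k) (m : ℕ) : ACMod d (k + 1) :=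
  if h : m ∈ Finset.Ioo 0 d \ S.1 then
    ACcoef d S.1 m •
      Finsupp.single
        (⟨insert m S.1, Finset.insert_subset (Finset.mem_sdiff.mp h).1 S.2.1, by
          rw [Finset.card_insert_of_notMem (Finset.mem_sdiff.mp h).2, S.2.2]⟩ :
            ACBasis d (k + 1)) (1 : ℤ)
  else 0

def ACinsert (S : ACBasis d k) {m : ℕ} (hm : m ∈ Finset.Ioo 0 d \ S.1) : ACBasis d (k + 1) :=
  ⟨insert m S.1, Finset.insert_subset (Finset.mem_sdiff.mp hm).1 S.2.1, by
    rw [Finset.card_insert_of_notMem (Finset.mem_sdiff.mp hm).2, S.2.2]⟩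

lemma ACinsert_val (S : ACBasis d k) {m : ℕ} (hm : m ∈ Finset.Ioo 0 d \ S.1) :
    (ACinsert S hm).1 = insert m S.1 := rfl

lemma ACdiffSingle_eq (S : ACBasis d k) :
    ACdiffSingle d k S = ∑ m ∈ Finset.Ioo 0 d \ S.1, ACD d k S m := by
  unfold ACdiffSingle
  rw [← Finset.sum_attach (Finset.Ioo 0 d \ S.1) (ACD d k S)]
  refine Finset.sum_congr rfl fun x _ => ?_
  unfold ACD
  refine Eq.symm ?_
  exact dif_pos x.2

lemma ACD_eq {S : ACBasis d k} {m : ℕ} (hm : m ∈ Finset.Ioo 0 d \ S.1)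
    (T : ACBasis d (k + 1)) (hT : T.1 = insert m S.1) :
    ACD d k S m = ACcoef d S.1 m • Finsupp.single T 1 := by
  unfold ACD
  refine (dif_pos hm).trans ?_
  obtain ⟨Tv, hTp⟩ := T
  have hTv : Tv = insert m S.1 := hT
  subst hTv
  rfl

lemma AChSingle_eq {T : ACBasis d (k + 1)} (h1 : 1 ∈ T.1) (B : ACBasis d k)
    (hB : B.1 = T.1.erase 1) :
    AChSingle d k T = (-((d.factorial / ACnext d B.1 1 : ℕ) : ℤ)) • Finsupp.single B 1 := by
  unfold AChSingle
  refine (dif_pos h1).trans ?_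
  obtain ⟨Bv, hBp⟩ := B
  have hBv : Bv = T.1.erase 1 := hB
  subst hBv
  rfl

lemma AChSingle_eq_zero {T : ACBasis d (k + 1)} (h1 : 1 ∉ T.1) : AChSingle d k T = 0 := by
  unfold AChSingle
  exact dif_neg h1

lemma neg_div_mul (hd0 : 0 < d) {n : ℕ} (hn : n ∣ d.factorial) :
    (-((d.factorial / n : ℕ) : ℤ)) * (-(n : ℤ)) = (d.factorial : ℤ) := by
  have h : ((n : ℕ) : ℤ) * ((d.factorial / n : ℕ) : ℤ) = (d.factorial : ℤ) := by
    rw [← Nat.cast_mul, Nat.mul_div_cancel' hn]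
  linear_combination h

lemma ACh_ACD_of_ne_one {S : ACBasis d k} (h1 : 1 ∉ S.1) {m : ℕ} (hm : m ≠ 1) :
    ACh d k (ACD d k S m) = 0 := by
  by_cases h : m ∈ Finset.Ioo 0 d \ S.1
  · rw [ACD_eq h (ACinsert S h) (ACinsert_val S h), map_smul, ACh_single, one_smul,
      AChSingle_eq_zero (by
        simp only [ACinsert_val, Finset.mem_insert, not_or]
        exact ⟨fun e => hm e.symm, h1⟩), smul_zero]
  · unfold ACD
    exact (congrArg _ (dif_neg h)).trans (map_zero _)

lemma ACh_ACD_one (hd : 2 ≤ d) (S : ACBasis d k) (h1 : 1 ∉ S.1) :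
    ACh d k (ACD d k S 1) = (d.factorial : ℤ) • Finsupp.single S 1 := by
  have hd0 : 0 < d := by omega
  have hmem : (1 : ℕ) ∈ Finset.Ioo 0 d \ S.1 := by
    rw [Finset.mem_sdiff, Finset.mem_Ioo]
    exact ⟨⟨one_pos, by omega⟩, h1⟩
  have h1T : 1 ∈ (ACinsert S hmem).1 := by
    rw [ACinsert_val]; exact Finset.mem_insert_self 1 S.1
  have hBS : S.1 = (ACinsert S hmem).1.erase 1 := by
    rw [ACinsert_val, Finset.erase_insert h1]
  rw [ACD_eq hmem (ACinsert S hmem) (ACinsert_val S hmem), map_smul, ACh_single, one_smul,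
    AChSingle_eq h1T S hBS, smul_smul]
  have hdvd : ACnext d S.1 1 ∣ d.factorial := ACnext_dvd_factorial hd0 S.2.1 1
  rw [ACcoef_one S.2.1]
  rw [mul_comm, neg_div_mul hd0 hdvd]

lemma key_no_one (hd : 2 ≤ d) (S : ACBasis d k) (h1 : 1 ∉ S.1) :
    ACh d k (ACdiffSingle d k S) = (d.factorial : ℤ) • Finsupp.single S 1 := by
  rw [ACdiffSingle_eq, map_sum]
  have hmem : (1 : ℕ) ∈ Finset.Ioo 0 d \ S.1 := by
    rw [Finset.mem_sdiff, Finset.mem_Ioo]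
    exact ⟨⟨one_pos, by omega⟩, h1⟩
  rw [Finset.sum_eq_single_of_mem 1 hmem fun m _ hne => ACh_ACD_of_ne_one h1 hne]
  exact ACh_ACD_one hd S h1

lemma key_term (hd : 2 ≤ d) (S : ACBasis d (k + 1)) (h1 : 1 ∈ S.1) (B : ACBasis d k)
    (hB : B.1 = S.1.erase 1) {m : ℕ} (hm : m ∈ Finset.Ioo 0 d \ S.1) :
    ACh d (k + 1) (ACD d (k + 1) S m)
      + (-((d.factorial / ACnext d B.1 1 : ℕ) : ℤ)) • ACD d k B m = 0 := by
  obtain ⟨hmI, hmS⟩ := Finset.mem_sdiff.mp hm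
  obtain ⟨hm0, hmd⟩ := Finset.mem_Ioo.mp hmI
  have hm1 : 1 < m := by
    rcases eq_or_ne m 1 with rfl | hne
    · exact absurd h1 hmS
    · omega
  have h1B : 1 ∉ B.1 := by rw [hB]; exact Finset.notMem_erase _ _
  have hmB1 : m ∉ B.1 := by
    rw [hB]; exact fun hx => hmS (Finset.mem_of_mem_erase hx)
  have hmB : m ∈ Finset.Ioo 0 d \ B.1 := Finset.mem_sdiff.mpr ⟨hmI, hmB1⟩
  have hS1 : S.1 = insert 1 B.1 := by rw [hB, Finset.insert_erase h1]
  have h1T : 1 ∈ (ACinsert S hm).1 := by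
    rw [ACinsert_val]; exact Finset.mem_insert_of_mem h1
  have hB'T : (ACinsert B hmB).1 = (ACinsert S hm).1.erase 1 := by
    rw [ACinsert_val, ACinsert_val, Finset.erase_insert_of_ne (by omega : m ≠ 1), hB]
  rw [ACD_eq hm (ACinsert S hm) (ACinsert_val S hm), map_smul, ACh_single, one_smul,
    AChSingle_eq h1T (ACinsert B hmB) hB'T,
    ACD_eq hmB (ACinsert B hmB) (ACinsert_val B hmB), smul_smul, smul_smul, ← add_smul]
  have hE : ACcoef d S.1 m * (-((d.factorial / ACnext d (ACinsert B hmB).1 1 : ℕ) : ℤ))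
      + (-((d.factorial / ACnext d B.1 1 : ℕ) : ℤ)) * ACcoef d B.1 m = 0 := by
    rw [ACinsert_val, hS1]
    exact scalar_key hd B.2.1 h1B hm1 hmd hmB1
  rw [hE, zero_smul]

lemma key (hd : 2 ≤ d) (S : ACBasis d (k + 1)) :
    ACh d (k + 1) (ACdiffSingle d (k + 1) S) + ACdiff d k (AChSingle d k S)
      = (d.factorial : ℤ) • Finsupp.single S 1 := by
  have hd0 : 0 < d := by omega
  by_cases h1 : 1 ∈ S.1
  · have hBsub : S.1.erase 1 ⊆ Finset.Ioo 0 d := (Finset.erase_subset _ _).trans S.2.1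
    have hBcard : (S.1.erase 1).card = k := by
      rw [Finset.card_erase_of_mem h1, S.2.2]; omega
    set B : ACBasis d k := ⟨S.1.erase 1, hBsub, hBcard⟩ with hBdef
    have hBv : B.1 = S.1.erase 1 := rfl
    rw [AChSingle_eq h1 B hBv, map_smul, ACdiff_single, one_smul]
    rw [ACdiffSingle_eq S, map_sum, ACdiffSingle_eq B]
    have hsd : Finset.Ioo 0 d \ B.1 = insert 1 (Finset.Ioo 0 d \ S.1) := by
      rw [hBv]
      exact Finset.sdiff_erase (Finset.mem_Ioo.mpr ⟨one_pos, by omega⟩)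
    rw [hsd, Finset.sum_insert (by simp [h1]), smul_add, Finset.smul_sum]
    have h1B : (1 : ℕ) ∈ Finset.Ioo 0 d \ B.1 := by
      rw [hsd]; exact Finset.mem_insert_self _ _
    have hSB : S.1 = insert 1 B.1 := by rw [hBv, Finset.insert_erase h1]
    have hone : (-((d.factorial / ACnext d B.1 1 : ℕ) : ℤ)) • ACD d k B 1
        = (d.factorial : ℤ) • Finsupp.single S 1 := by
      rw [ACD_eq h1B S hSB, smul_smul, ACcoef_one B.2.1,
        neg_div_mul hd0 (ACnext_dvd_factorial hd0 B.2.1 1)]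
    rw [hone]
    have hzero : ∑ m ∈ Finset.Ioo 0 d \ S.1,
        (ACh d (k + 1) (ACD d (k + 1) S m)
          + (-((d.factorial / ACnext d B.1 1 : ℕ) : ℤ)) • ACD d k B m) = 0 :=
      Finset.sum_eq_zero fun m hm => key_term hd S h1 B hBv hm
    rw [Finset.sum_add_distrib] at hzero
    rw [add_left_comm, hzero, add_zero]
  · rw [AChSingle_eq_zero h1, map_zero, add_zero]
    exact key_no_one hd S h1

lemma hom_deg0 (hd : 2 ≤ d) (z : ACMod d 0) :
    ACh d 0 (ACdiff d 0 z) = (d.factorial : ℤ) • z := by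
  have heq : (ACh d 0).comp (ACdiff d 0)
      = (d.factorial : ℤ) • (LinearMap.id : ACMod d 0 →ₗ[ℤ] ACMod d 0) := by
    apply Finsupp.lhom_ext
    intro S b
    have h1 : 1 ∉ S.1 := by
      have hS : S.1 = ∅ := Finset.card_eq_zero.mp S.2.2
      rw [hS]; exact Finset.notMem_empty 1
    simp only [LinearMap.comp_apply, LinearMap.smul_apply, LinearMap.id_apply]
    rw [ACdiff_single, map_smul, key_no_one hd S h1, smul_smul,
      Finsupp.smul_single, Finsupp.smul_single]
    congr 1
    simp [smul_eq_mul]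
    ring
  have h2 := LinearMap.congr_fun heq z
  simpa using h2

lemma hom_deg (hd : 2 ≤ d) (k : ℕ) (z : ACMod d (k + 1)) :
    ACh d (k + 1) (ACdiff d (k + 1) z) + ACdiff d k (ACh d k z)
      = (d.factorial : ℤ) • z := by
  have heq : (ACh d (k + 1)).comp (ACdiff d (k + 1)) + (ACdiff d k).comp (ACh d k)
      = (d.factorial : ℤ) • (LinearMap.id : ACMod d (k + 1) →ₗ[ℤ] ACMod d (k + 1)) := by
    apply Finsupp.lhom_ext
    intro S b
    simp only [LinearMap.add_apply, LinearMap.comp_apply, LinearMap.smul_apply,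
      LinearMap.id_apply]
    rw [ACdiff_single, ACh_single, map_smul, map_smul, ← smul_add, key hd S, smul_smul,
      Finsupp.smul_single, Finsupp.smul_single]
    congr 1
    simp [smul_eq_mul]
    ring
  have h2 := LinearMap.congr_fun heq z
  simpa using h2

instance : Finite (ACBasis d k) := by
  apply Finite.of_injective (fun S : ACBasis d k =>
    (⟨S.1, Finset.mem_powerset.mpr S.2.1⟩ : {T // T ∈ (Finset.Ioo 0 d).powerset}))
  intro a b h
  have h2 := congrArg (fun x : {T // T ∈ (Finset.Ioo 0 d).powerset} => x.1) h
  exact Subtype.ext h2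

end AroneAux




/-- for `d ≥ 2`, every `Hⁱ(AC(d))` with `i ≥ 1` is a finite group and
`H⁰(AC(d)) = 0`. -/
theorem H_aroneComplex_finite (d : ℕ) (hd : 2 ≤ d) :
    (∀ i : ℕ, 1 ≤ i → Finite (ACH d i)) ∧ Subsingleton (ACH d 0) := by
  have hD : (d.factorial : ℤ) ≠ 0 := by
    exact_mod_cast (Nat.factorial_pos d).ne'
  constructor
  · intro i hi
    obtain ⟨k, rfl⟩ : ∃ k, i = k + 1 := ⟨i - 1, by omega⟩
    haveI : IsNoetherian ℤ (ACMod d (k + 1)) := isNoetherian_of_isNoetherianRing_of_finite ℤ _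
    haveI : Module.Finite ℤ (ACZ d (k + 1)) := inferInstance
    haveI : Module.Finite ℤ (ACH d (k + 1)) :=
      Module.Finite.of_surjective (Submodule.mkQ _) (Submodule.mkQ_surjective _)
    refine Module.finite_of_fg_torsion _ fun x => ?_
    obtain ⟨z, rfl⟩ := Submodule.Quotient.mk_surjective _ x
    refine ⟨⟨(d.factorial : ℤ), mem_nonZeroDivisors_of_ne_zero hD⟩, ?_⟩
    show (d.factorial : ℤ) • (Submodule.Quotient.mk z : ACH d (k + 1)) = 0
    rw [← Submodule.Quotient.mk_smul, Submodule.Quotient.mk_eq_zero, Submodule.mem_comap]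
    have hz : ACdiff d (k + 1) z.1 = 0 := z.2
    have hkey := AroneAux.hom_deg hd k z.1
    rw [hz, map_zero, zero_add] at hkey
    show (d.factorial : ℤ) • z.1 ∈ LinearMap.range (ACdiff d k)
    exact LinearMap.mem_range.mpr ⟨AroneAux.ACh d k z.1, hkey⟩
  · have hz0 : ∀ z : ACZ d 0, z = 0 := by
      intro z
      have hz : ACdiff d 0 z.1 = 0 := z.2
      have h := AroneAux.hom_deg0 hd z.1
      rw [hz, map_zero] at h
      have hz1 : z.1 = 0 := by
        rcases smul_eq_zero.mp h.symm with h' | h'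
        · exact absurd h' hD
        · exact h'
      exact Subtype.ext hz1
    refine ⟨fun a b => ?_⟩
    obtain ⟨x, rfl⟩ := Submodule.Quotient.mk_surjective _ a
    obtain ⟨y, rfl⟩ := Submodule.Quotient.mk_surjective _ b
    rw [hz0 x, hz0 y]

end
end
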